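/- Let p̃, q̃ be integers with p̃ ≠ 0 and q̃ ≥ 97·|p̃|. Then the equation Q_{p̃+q̃, q̃}(t) = 0 has exactly one real root t with t > 0, and this root satisfies q̃² + 5·p̃·q̃ + 10·p̃² − 74·|p̃|³/q̃ < t < q̃² + 5·p̃·q̃ + 10·p̃² if p̃ > 0, and q̃² + 5·p̃·q̃ + 10·p̃² < t < q̃² + 5·p̃·q̃ + 10·p̃² + 74·|p̃|³/q̃ if p̃ < 0. -/

import Mathlib

/-!
Dividing by `t⁴`, `Q_{p,q}(t) / t⁴ = t⁶ + A t⁴ + B t² - C - D t⁻² - E t⁻⁴`, and for `p/q` close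
to `1` the coefficients `A, B, D, E` are nonnegative, so `Q_{p,q}(t) / t⁴` is strictly increasing
on `t > 0` and `Q_{p,q}` has at most one positive root. With `a = p̃`, `b = q̃` and
`t₀ = b² + 5ab + 10a²`, both `a · Q_{a+b,b}(t₀)` and `-a · Q_{a+b,b}(t₀ - 74a³/b)` are positive;
writing `a = ±u`, `b = 97u + m` with `u > 0`, `m ≥ 0` turns each of them (after clearing the
denominator) into a polynomial in `u, m` with positive coefficients. The intermediate value
theorem then places the root strictly between `t₀` and `t₀ - 74a³/b`.
-/

/-- The cuboid characteristic polynomial `Q_{p,q}(t)`. -/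
def cuboidQ {R : Type*} [CommRing R] (p q t : R) : R :=
  t ^ 10 + (2 * q ^ 2 + p ^ 2) * (3 * q ^ 2 - 2 * p ^ 2) * t ^ 8
    + (q ^ 8 + 10 * p ^ 2 * q ^ 6 + 4 * p ^ 4 * q ^ 4 - 14 * p ^ 6 * q ^ 2 + p ^ 8) * t ^ 6
    - p ^ 2 * q ^ 2 * (q ^ 8 - 14 * p ^ 2 * q ^ 6 + 4 * p ^ 4 * q ^ 4 + 10 * p ^ 6 * q ^ 2 + p ^ 8) * t ^ 4
    - p ^ 6 * q ^ 6 * (q ^ 2 + 2 * p ^ 2) * (3 * p ^ 2 - 2 * q ^ 2) * t ^ 2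
    - p ^ 10 * q ^ 10

open Set

theorem cuboidQ_mul {R : Type*} [CommRing R] (c p q t : R) :
    cuboidQ (c * p) (c * q) (c ^ 2 * t) = c ^ 20 * cuboidQ p q t := by
  unfold cuboidQ; ring

theorem continuous_cuboidQ (p q : ℝ) : Continuous (cuboidQ p q) := by
  unfold cuboidQ; fun_prop

theorem quartic_nonneg_of_mul_le {r s : ℝ} (hr : 0 ≤ r) (hs : 0 ≤ s) (h : 12 * r ≤ 13 * s) :
    0 ≤ s ^ 4 + 10 * r * s ^ 3 + 4 * r ^ 2 * s ^ 2 - 14 * r ^ 3 * s + r ^ 4 := by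
  rcases le_total r s with hrs | hsr
  · nlinarith [mul_nonneg hr hs, mul_nonneg (mul_nonneg hr hs) (sub_nonneg.2 hrs),
      pow_nonneg hs 2, pow_nonneg hr 2]
  · obtain ⟨d, hd, rfl⟩ : ∃ d, 0 ≤ d ∧ r = s + d := ⟨r - s, by linarith, by ring⟩
    have h12 : 0 ≤ s - 12 * d := by linarith
    nlinarith [mul_nonneg (pow_nonneg hs 3) h12, mul_nonneg (mul_nonneg hd (pow_nonneg hs 2)) h12,
      mul_nonneg (mul_nonneg (pow_nonneg hd 2) hs) h12, mul_nonneg (pow_nonneg hd 3) hs,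
      pow_nonneg hd 4]

theorem strictMonoOn_cuboidQ_div_pow_four {p q : ℝ} (h₁ : 2 * q ^ 2 ≤ 3 * p ^ 2)
    (h₂ : 12 * p ^ 2 ≤ 13 * q ^ 2) :
    StrictMonoOn (fun t => cuboidQ p q t / t ^ 4) (Ioi 0) := by
  have hA : 0 ≤ (2 * q ^ 2 + p ^ 2) * (3 * q ^ 2 - 2 * p ^ 2) :=
    mul_nonneg (by positivity) (by linarith)
  have hB : 0 ≤ q ^ 8 + 10 * p ^ 2 * q ^ 6 + 4 * p ^ 4 * q ^ 4 - 14 * p ^ 6 * q ^ 2 + p ^ 8 := by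
    linarith [quartic_nonneg_of_mul_le (sq_nonneg p) (sq_nonneg q) h₂]
  have hD : 0 ≤ p ^ 6 * q ^ 6 * (q ^ 2 + 2 * p ^ 2) * (3 * p ^ 2 - 2 * q ^ 2) :=
    mul_nonneg (by positivity) (by linarith)
  have hexpand : ∀ t : ℝ, t ≠ 0 → cuboidQ p q t / t ^ 4 =
      t ^ 6 + (2 * q ^ 2 + p ^ 2) * (3 * q ^ 2 - 2 * p ^ 2) * t ^ 4
        + (q ^ 8 + 10 * p ^ 2 * q ^ 6 + 4 * p ^ 4 * q ^ 4 - 14 * p ^ 6 * q ^ 2 + p ^ 8) * t ^ 2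
        - p ^ 2 * q ^ 2 * (q ^ 8 - 14 * p ^ 2 * q ^ 6 + 4 * p ^ 4 * q ^ 4 + 10 * p ^ 6 * q ^ 2 + p ^ 8)
        - p ^ 6 * q ^ 6 * (q ^ 2 + 2 * p ^ 2) * (3 * p ^ 2 - 2 * q ^ 2) / t ^ 2
        - p ^ 10 * q ^ 10 / t ^ 4 := by
    intro t ht
    unfold cuboidQ; field_simp
  intro s (hs : 0 < s) t (ht : 0 < t) hst
  simp only [hexpand s hs.ne', hexpand t ht.ne']
  have h6 : s ^ 6 < t ^ 6 := by gcongr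
  have h4 : (2 * q ^ 2 + p ^ 2) * (3 * q ^ 2 - 2 * p ^ 2) * s ^ 4
      ≤ (2 * q ^ 2 + p ^ 2) * (3 * q ^ 2 - 2 * p ^ 2) * t ^ 4 := by gcongr
  have h2 : (q ^ 8 + 10 * p ^ 2 * q ^ 6 + 4 * p ^ 4 * q ^ 4 - 14 * p ^ 6 * q ^ 2 + p ^ 8) * s ^ 2
      ≤ (q ^ 8 + 10 * p ^ 2 * q ^ 6 + 4 * p ^ 4 * q ^ 4 - 14 * p ^ 6 * q ^ 2 + p ^ 8) * t ^ 2 := by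
    gcongr
  have hm2 : p ^ 6 * q ^ 6 * (q ^ 2 + 2 * p ^ 2) * (3 * p ^ 2 - 2 * q ^ 2) / t ^ 2
      ≤ p ^ 6 * q ^ 6 * (q ^ 2 + 2 * p ^ 2) * (3 * p ^ 2 - 2 * q ^ 2) / s ^ 2 := by gcongr
  have hm4 : p ^ 10 * q ^ 10 / t ^ 4 ≤ p ^ 10 * q ^ 10 / s ^ 4 := by gcongr
  linarith

theorem existsUnique_pos_root_of_strictMonoOn_div_pow {f : ℝ → ℝ} {n : ℕ} {l r : ℝ}
    (hf : Continuous f) (hmono : StrictMonoOn (fun t => f t / t ^ n) (Ioi 0))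
    (hl : 0 < l) (hr : 0 < r) (hfl : f l < 0) (hfr : 0 < f r) :
    (∃! t, 0 < t ∧ f t = 0) ∧ ∀ t, 0 < t → f t = 0 → t ∈ Ioo l r := by
  have hgl : f l / l ^ n < 0 := div_neg_of_neg_of_pos hfl (pow_pos hl n)
  have hgr : 0 < f r / r ^ n := div_pos hfr (pow_pos hr n)
  have hbetween : ∀ t, 0 < t → f t = 0 → t ∈ Ioo l r := by
    intro t ht hft
    have hgt : f t / t ^ n = 0 := by rw [hft, zero_div]
    exact ⟨(hmono.lt_iff_lt hl ht).1 (hgt ▸ hgl), (hmono.lt_iff_lt ht hr).1 (hgt ▸ hgr)⟩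
  have hlr : l < r := (hmono.lt_iff_lt hl hr).1 (hgl.trans hgr)
  obtain ⟨t₀, ⟨hlt₀, -⟩, ht₀⟩ := intermediate_value_Ioo hlr.le hf.continuousOn ⟨hfl, hfr⟩
  refine ⟨⟨t₀, ⟨hl.trans hlt₀, ht₀⟩, fun t ⟨ht, hft⟩ => ?_⟩, hbetween⟩
  exact hmono.injOn ht (hl.trans hlt₀) (by simp only [hft, ht₀, zero_div])

theorem strictMonoOn_cuboidQ_bisector {a b : ℝ} (hb : 97 * |a| ≤ b) :
    StrictMonoOn (fun t => cuboidQ (a + b) b t / t ^ 4) (Ioi 0) := by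
  obtain ⟨hlo, hhi⟩ := abs_le.1 (le_div_iff₀' (by norm_num : (0 : ℝ) < 97) |>.2 hb)
  have hb0 : 0 ≤ b := (by positivity : 0 ≤ 97 * |a|).trans hb
  apply strictMonoOn_cuboidQ_div_pow_four <;> nlinarith

theorem exists_eq_mul_add_of_abs_le {c a b : ℝ} (ha : a ≠ 0) (hb : c * |a| ≤ b) :
    ∃ u m, 0 < u ∧ 0 ≤ m ∧ (a = u ∨ a = -u) ∧ b = c * u + m := by
  refine ⟨|a|, b - c * |a|, abs_pos.2 ha, by linarith, ?_, by ring⟩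
  rcases abs_choice a with h | h <;> [left; right] <;> linarith

def approxRoot (a b : ℝ) : ℝ := b ^ 2 + 5 * a * b + 10 * a ^ 2

theorem approxRoot_pos {a b : ℝ} (ha : a ≠ 0) (hb : 97 * |a| ≤ b) :
    0 < approxRoot a b := by
  obtain ⟨u, m, hu, hm, rfl | rfl, rfl⟩ := exists_eq_mul_add_of_abs_le ha hb <;>
  · unfold approxRoot; ring_nf; positivity

theorem approxRoot_sub_pos {a b : ℝ} (ha : a ≠ 0) (hb : 97 * |a| ≤ b) :
    0 < approxRoot a b - 74 * a ^ 3 / b := by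
  have hb0 : 0 < b := lt_of_lt_of_le (by positivity) hb
  rw [show approxRoot a b - 74 * a ^ 3 / b = (b * approxRoot a b - 74 * a ^ 3) / b by field_simp]
  refine div_pos ?_ hb0
  obtain ⟨u, m, hu, hm, rfl | rfl, rfl⟩ := exists_eq_mul_add_of_abs_le ha hb <;>
  · unfold approxRoot; ring_nf; positivity

theorem mul_cuboidQ_approxRoot_pos {a b : ℝ} (ha : a ≠ 0) (hb : 97 * |a| ≤ b) :
    0 < a * cuboidQ (a + b) b (approxRoot a b) := by
  obtain ⟨u, m, hu, hm, rfl | rfl, rfl⟩ := exists_eq_mul_add_of_abs_le ha hb <;>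
  · unfold cuboidQ approxRoot; ring_nf; positivity

set_option maxRecDepth 10000 in
theorem mul_cuboidQ_approxRoot_sub_neg {a b : ℝ} (ha : a ≠ 0) (hb : 97 * |a| ≤ b) :
    a * cuboidQ (a + b) b (approxRoot a b - 74 * a ^ 3 / b) < 0 := by
  have hb0 : 0 < b := lt_of_lt_of_le (by positivity) hb
  -- weighted homogeneity of `Q` (weight 2 on `t`) clears the denominator `b`
  have hscale :
      b ^ 2 * (approxRoot a b - 74 * a ^ 3 / b) = b * (b * approxRoot a b - 74 * a ^ 3) := by
    field_simp
  suffices 0 < -(a * cuboidQ (b * (a + b)) (b * b) (b * (b * approxRoot a b - 74 * a ^ 3))) by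
    rw [← hscale, cuboidQ_mul] at this
    nlinarith [pow_pos hb0 20]
  obtain ⟨u, m, hu, hm, rfl | rfl, rfl⟩ := exists_eq_mul_add_of_abs_le ha hb <;>
  · unfold cuboidQ approxRoot; ring_nf; positivity

/-- For integers `p̃ ≠ 0` and `q̃ ≥ 97|p̃|`, the equation `Q_{p̃+q̃, q̃}(t) = 0` has
exactly one positive real root, and it lies in the asymptotic interval
`(q̃² + 5p̃q̃ + 10p̃² − 74|p̃|³/q̃, q̃² + 5p̃q̃ + 10p̃²)` when `p̃ > 0`, and in
`(q̃² + 5p̃q̃ + 10p̃², q̃² + 5p̃q̃ + 10p̃² + 74|p̃|³/q̃)` when `p̃ < 0`. -/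
theorem stmt_13 (p' q' : ℤ) (hp : p' ≠ 0) (hq : 97 * |p'| ≤ q') :
    (∃! t : ℝ, 0 < t ∧ cuboidQ ((p' : ℝ) + (q' : ℝ)) (q' : ℝ) t = 0) ∧
    (∀ t : ℝ, 0 < t → cuboidQ ((p' : ℝ) + (q' : ℝ)) (q' : ℝ) t = 0 →
      ((0 < p' →
        (q' : ℝ) ^ 2 + 5 * (p' : ℝ) * (q' : ℝ) + 10 * (p' : ℝ) ^ 2
            - 74 * |(p' : ℝ)| ^ 3 / (q' : ℝ) < t ∧
        t < (q' : ℝ) ^ 2 + 5 * (p' : ℝ) * (q' : ℝ) + 10 * (p' : ℝ) ^ 2) ∧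
       (p' < 0 →
        (q' : ℝ) ^ 2 + 5 * (p' : ℝ) * (q' : ℝ) + 10 * (p' : ℝ) ^ 2 < t ∧
        t < (q' : ℝ) ^ 2 + 5 * (p' : ℝ) * (q' : ℝ) + 10 * (p' : ℝ) ^ 2
            + 74 * |(p' : ℝ)| ^ 3 / (q' : ℝ)))) := by
  have ha : (p' : ℝ) ≠ 0 := Int.cast_ne_zero.2 hp
  have hb : 97 * |(p' : ℝ)| ≤ q' := by exact_mod_cast hq
  have hroot (l r : ℝ) := existsUnique_pos_root_of_strictMonoOn_div_pow (l := l) (r := r)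
    (continuous_cuboidQ _ _) (strictMonoOn_cuboidQ_bisector hb)
  have hQ₀ := mul_cuboidQ_approxRoot_pos ha hb
  have hQ₁ := mul_cuboidQ_approxRoot_sub_neg ha hb
  rcases hp.lt_or_gt with hneg | hpos
  · have hneg' : (p' : ℝ) < 0 := Int.cast_lt_zero.2 hneg
    have hcorr : 74 * |(p' : ℝ)| ^ 3 / q' = -(74 * (p' : ℝ) ^ 3 / q') := by
      rw [abs_of_neg hneg']; ring
    obtain ⟨huniq, hloc⟩ := hroot _ _ (approxRoot_pos ha hb) (approxRoot_sub_pos ha hb)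
      (neg_of_mul_pos_right hQ₀ hneg'.le) (pos_of_mul_neg_right hQ₁ hneg'.le)
    refine ⟨huniq, fun t ht hQt => ⟨fun h => absurd h hneg.not_gt, fun _ => ?_⟩⟩
    rw [hcorr, ← sub_eq_add_neg]
    exact hloc t ht hQt
  · have hpos' : (0 : ℝ) < p' := Int.cast_pos.2 hpos
    rw [abs_of_pos hpos']
    obtain ⟨huniq, hloc⟩ := hroot _ _ (approxRoot_sub_pos ha hb) (approxRoot_pos ha hb)
      (neg_of_mul_neg_right hQ₁ hpos'.le) (pos_of_mul_pos_right hQ₀ hpos'.le)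
    exact ⟨huniq, fun t ht hQt => ⟨fun _ => hloc t ht hQt, fun h => absurd h hpos.not_gt⟩⟩
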